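/- Let Σ be the free monoid on a nonempty finite or countable alphabet W, μ a probability measure on Σ, and φ : Σ → ℕ the length homomorphism φ(g) = |g|. If the pushforward μ_φ = φ_*μ has finite entropy, then lim_{k→∞} (1/k) H(φ_*(μ^{⋆k})) = 0, where μ^{⋆k} is the k-fold convolution of μ on Σ and H denotes Shannon entropy; moreover φ_*(μ^{⋆k}) = (μ_φ)^{⋆k}, the k-fold additive convolution on ℕ. -/

import Mathlib

open Filter

namespace Stmt4

/-- Convolution of two (sub)probability mass functions on the free monoid:
`(a ⋆ b)(x) = ∑_{x₁x₂ = x} a(x₁)·b(x₂)`. -/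
noncomputable def mconv {W : Type*} (a b : FreeMonoid W → ℝ) : FreeMonoid W → ℝ := fun x =>
  ∑' p : {p : FreeMonoid W × FreeMonoid W // p.1 * p.2 = x}, a p.1.1 * b p.1.2

open scoped Classical in
/-- The `k`-fold convolution `μ^{⋆k}` on the free monoid (with `μ^{⋆0} = δ_e`). -/
noncomputable def iterConvM {W : Type*} (μ : FreeMonoid W → ℝ) : ℕ → FreeMonoid W → ℝ
  | 0 => fun x => if x = 1 then 1 else 0
  | k + 1 => mconv (iterConvM μ k) μ

/-- The pushforward of a mass function on the free monoid under the length homomorphism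
`φ(x) = |x|`. -/
noncomputable def pushLen {W : Type*} (μ : FreeMonoid W → ℝ) : ℕ → ℝ := fun n =>
  ∑' x : {x : FreeMonoid W // FreeMonoid.length x = n}, μ x.1

/-- Additive convolution on `ℕ`. -/
noncomputable def conv (a b : ℕ → ℝ) : ℕ → ℝ := fun m =>
  ∑ i ∈ Finset.range (m + 1), a i * b (m - i)

/-- The `k`-fold additive convolution on `ℕ` (with `θ^{⋆0} = δ_0`). -/
noncomputable def iterConv (θ : ℕ → ℝ) : ℕ → ℕ → ℝ
  | 0 => fun m => if m = 0 then 1 else 0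
  | k + 1 => conv (iterConv θ k) θ

/-- The Shannon entropy `H(ν) = -∑_n ν(n) log ν(n)` (with `0·log 0 = 0`). -/
noncomputable def entropy (ν : ℕ → ℝ) : ℝ := -∑' n, ν n * Real.log (ν n)

/-- key pointwise inequality -/
lemma mul_neg_log_le {x s : ℝ} (hx : 0 ≤ x) (hxs : x ≤ s) :
    x * (-Real.log s) ≤ Real.negMulLog x := by
  rcases hx.eq_or_lt with h | h
  · simp [← h, Real.negMulLog]
  · have : Real.log x ≤ Real.log s := Real.log_le_log h hxs
    have h2 : x * (-Real.log s) ≤ x * (-Real.log x) :=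
      mul_le_mul_of_nonneg_left (by linarith) hx
    refine h2.trans (le_of_eq ?_)
    rw [Real.negMulLog]; ring

lemma negMulLog_sum_le {ι : Type*} (s : Finset ι) (t : ι → ℝ) (ht : ∀ i ∈ s, 0 ≤ t i) :
    Real.negMulLog (∑ i ∈ s, t i) ≤ ∑ i ∈ s, Real.negMulLog (t i) := by
  have h1 : Real.negMulLog (∑ i ∈ s, t i)
      = ∑ i ∈ s, t i * (-Real.log (∑ j ∈ s, t j)) := by
    rw [← Finset.sum_mul, Real.negMulLog]; ring
  rw [h1]
  refine Finset.sum_le_sum fun i hi => mul_neg_log_le (ht i hi) ?_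
  exact Finset.single_le_sum ht hi

/-- finite Gibbs: entropy of a prob vector on a finite set is at most log of its size -/
lemma sum_negMulLog_le_log_card {s : Finset ℕ} {p : ℕ → ℝ} (h0 : ∀ i ∈ s, 0 ≤ p i)
    (h1 : ∑ i ∈ s, p i = 1) :
    ∑ i ∈ s, Real.negMulLog (p i) ≤ Real.log s.card := by
  have hcard : 0 < (s.card : ℝ) := by
    have : s.Nonempty := by
      by_contra h
      rw [Finset.not_nonempty_iff_eq_empty] at h
      simp [h] at h1
    exact_mod_cast Finset.card_pos.2 this
  have key : ∀ i ∈ s, Real.negMulLog (p i) ≤ (s.card : ℝ)⁻¹ - p i + p i * Real.log s.card := by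
    intro i hi
    rcases (h0 i hi).eq_or_lt with h | h
    · rw [← h]
      simp only [Real.negMulLog_zero, mul_zero, sub_zero, add_zero]
      positivity
    · have hpc : 0 < p i * s.card := by positivity
      have h2 : Real.log ((p i * s.card)⁻¹) ≤ (p i * s.card)⁻¹ - 1 :=
        Real.log_le_sub_one_of_pos (by positivity)
      rw [Real.log_inv] at h2
      have h3 : Real.log (p i * s.card) = Real.log (p i) + Real.log s.card :=
        Real.log_mul (ne_of_gt h) (ne_of_gt hcard)
      have h5 := mul_le_mul_of_nonneg_left h2 h.le
      have h6 : p i * ((p i * ↑s.card)⁻¹ - 1) = (s.card:ℝ)⁻¹ - p i := by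
        field_simp
      rw [h6, h3] at h5
      rw [Real.negMulLog]
      nlinarith
  calc ∑ i ∈ s, Real.negMulLog (p i) ≤ ∑ i ∈ s, ((s.card : ℝ)⁻¹ - p i + p i * Real.log s.card) :=
        Finset.sum_le_sum key
    _ = s.card * (s.card : ℝ)⁻¹ - 1 + Real.log s.card := by
        rw [Finset.sum_add_distrib, Finset.sum_sub_distrib, ← Finset.sum_mul, h1]
        simp [Finset.sum_const, mul_comm]
    _ ≤ Real.log s.card := by
        rw [mul_inv_cancel₀ (ne_of_gt hcard)]; simp

lemma conv_nonneg' {a b : ℕ → ℝ} (ha : ∀ n, 0 ≤ a n) (hb : ∀ n, 0 ≤ b n) (m : ℕ) :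
    0 ≤ conv a b m :=
  Finset.sum_nonneg fun i _ => mul_nonneg (ha i) (hb _)

lemma hasSum_conv {a b : ℕ → ℝ} {A B : ℝ} (ha0 : ∀ n, 0 ≤ a n) (hb0 : ∀ n, 0 ≤ b n)
    (ha : HasSum a A) (hb : HasSum b B) : HasSum (conv a b) (A * B) := by
  have hna : Summable fun i => ‖a i‖ := by
    simpa only [Real.norm_eq_abs, abs_of_nonneg (ha0 _)] using ha.summable
  have hnb : Summable fun i => ‖b i‖ := by
    simpa only [Real.norm_eq_abs, abs_of_nonneg (hb0 _)] using hb.summable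
  have hmul : Summable fun x : ℕ × ℕ => a x.1 * b x.2 := summable_mul_of_summable_norm hna hnb
  have hsum : Summable fun n => ∑ kl ∈ Finset.HasAntidiagonal.antidiagonal n, a kl.1 * b kl.2 :=
    summable_sum_mul_antidiagonal_of_summable_mul hmul
  have heq : (fun n => ∑ kl ∈ Finset.HasAntidiagonal.antidiagonal n, a kl.1 * b kl.2) = conv a b := by
    funext n
    rw [Finset.Nat.sum_antidiagonal_eq_sum_range_succ_mk (fun p => a p.1 * b p.2) n]
    rfl
  have htsum := tsum_mul_tsum_eq_tsum_sum_antidiagonal_of_summable_norm hna hnb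
  rw [ha.tsum_eq, hb.tsum_eq] at htsum
  rw [heq] at hsum htsum
  exact htsum ▸ hsum.hasSum

/-- entropy subadditivity for convolution, with summability -/
lemma entropy_conv {a b : ℕ → ℝ} (ha0 : ∀ n, 0 ≤ a n) (hb0 : ∀ n, 0 ≤ b n)
    (ha : HasSum a 1) (hb : HasSum b 1)
    (hea : Summable fun n => Real.negMulLog (a n)) (heb : Summable fun n => Real.negMulLog (b n)) :
    Summable (fun m => Real.negMulLog (conv a b m)) ∧
    ∑' m, Real.negMulLog (conv a b m) ≤
      (∑' n, Real.negMulLog (a n)) + ∑' n, Real.negMulLog (b n) := by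
  have ha1 : ∀ n, a n ≤ 1 := fun n => le_hasSum ha n fun j _ => ha0 j
  have hb1 : ∀ n, b n ≤ 1 := fun n => le_hasSum hb n fun j _ => hb0 j
  have hna : ∀ n, 0 ≤ Real.negMulLog (a n) := fun n => Real.negMulLog_nonneg (ha0 n) (ha1 n)
  have hnb : ∀ n, 0 ≤ Real.negMulLog (b n) := fun n => Real.negMulLog_nonneg (hb0 n) (hb1 n)
  have hc := hasSum_conv ha0 hb0 ha hb
  rw [one_mul] at hc
  have hc1 : ∀ m, conv a b m ≤ 1 := fun m =>
    le_hasSum hc m fun j _ => conv_nonneg' ha0 hb0 j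
  have h1 := hasSum_conv (fun n => hna n) hb0 hea.hasSum hb
  rw [mul_one] at h1
  have h2 := hasSum_conv ha0 (fun n => hnb n) ha heb.hasSum
  rw [one_mul] at h2
  have hpt : ∀ m, Real.negMulLog (conv a b m) ≤
      conv (fun n => Real.negMulLog (a n)) b m + conv a (fun n => Real.negMulLog (b n)) m := by
    intro m
    have h3 := negMulLog_sum_le (Finset.range (m+1)) (fun i => a i * b (m - i))
      (fun i _ => mul_nonneg (ha0 i) (hb0 _))
    refine h3.trans ?_
    rw [conv, conv, ← Finset.sum_add_distrib]
    refine le_of_eq (Finset.sum_congr rfl fun i _ => ?_)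
    rw [Real.negMulLog_mul]; ring
  have hrs : Summable fun m => conv (fun n => Real.negMulLog (a n)) b m
      + conv a (fun n => Real.negMulLog (b n)) m := (h1.summable).add (h2.summable)
  have hs : Summable fun m => Real.negMulLog (conv a b m) :=
    Summable.of_nonneg_of_le (fun m => Real.negMulLog_nonneg (conv_nonneg' ha0 hb0 m) (hc1 m))
      hpt hrs
  refine ⟨hs, ?_⟩
  calc ∑' m, Real.negMulLog (conv a b m) ≤ ∑' m, (conv (fun n => Real.negMulLog (a n)) b m
      + conv a (fun n => Real.negMulLog (b n)) m) := Summable.tsum_le_tsum hpt hs hrs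
    _ = (∑' n, Real.negMulLog (a n)) + ∑' n, Real.negMulLog (b n) := by
        rw [Summable.tsum_add h1.summable h2.summable, h1.tsum_eq, h2.tsum_eq]

section
variable {θ : ℕ → ℝ}

/-- facts about iterated convolution -/
lemma iter_nonneg (h0 : ∀ n, 0 ≤ θ n) : ∀ k n, 0 ≤ iterConv θ k n := by
  intro k
  induction k with
  | zero => intro n; simp only [iterConv]; split <;> norm_num
  | succ k ih => exact fun n => conv_nonneg' ih h0 n

lemma iter_hasSum (h0 : ∀ n, 0 ≤ θ n) (h1 : HasSum θ 1) : ∀ k, HasSum (iterConv θ k) 1 := by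
  intro k
  induction k with
  | zero =>
      simpa [iterConv] using hasSum_ite_eq (0 : ℕ) (1 : ℝ)
  | succ k ih =>
      have := hasSum_conv (iter_nonneg h0 k) h0 ih h1
      rwa [one_mul] at this

lemma iter_entropy (h0 : ∀ n, 0 ≤ θ n) (h1 : HasSum θ 1)
    (he : Summable fun n => Real.negMulLog (θ n)) :
    ∀ k, Summable (fun n => Real.negMulLog (iterConv θ k n)) ∧
      ∑' n, Real.negMulLog (iterConv θ k n) ≤ k * ∑' n, Real.negMulLog (θ n) := by
  intro k
  induction k with
  | zero =>
      have hz : ∀ n, Real.negMulLog (iterConv θ 0 n) = 0 := by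
        intro n; simp only [iterConv]; split <;> simp
      constructor
      · exact summable_of_ne_finset_zero (s := ∅) fun n _ => hz n
      · rw [tsum_eq_sum (s := ∅) fun n _ => hz n]; simp
  | succ k ih =>
      have h := entropy_conv (iter_nonneg h0 k) h0 (iter_hasSum h0 h1 k) h1 ih.1 he
      refine ⟨h.1, h.2.trans ?_⟩
      push_cast
      nlinarith [ih.2]

/-- support bound for convolution -/
lemma conv_support {a b : ℕ → ℝ} {N M : ℕ} (ha : ∀ i, N < i → a i = 0)
    (hb : ∀ j, M < j → b j = 0) : ∀ m, N + M < m → conv a b m = 0 := by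
  intro m hm
  refine Finset.sum_eq_zero fun i hi => ?_
  rw [Finset.mem_range] at hi
  by_cases h : N < i
  · rw [ha i h, zero_mul]
  · push_neg at h
    rw [hb (m - i) (by omega), mul_zero]

lemma iter_support {N : ℕ} (hθ : ∀ i, N < i → θ i = 0) :
    ∀ k m, k * N < m → iterConv θ k m = 0 := by
  intro k
  induction k with
  | zero => intro m hm; simp only [iterConv]; rw [if_neg]; omega
  | succ k ih =>
      intro m hm
      refine conv_support ih hθ m ?_
      have hkn : (k + 1) * N = k * N + N := by ring
      omega

/-- entropy bound for finitely supported prob measures -/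
lemma entropy_of_support {p : ℕ → ℝ} {M : ℕ} (h0 : ∀ n, 0 ≤ p n) (h1 : HasSum p 1)
    (hs : ∀ n, M < n → p n = 0) :
    Summable (fun n => Real.negMulLog (p n)) ∧
      ∑' n, Real.negMulLog (p n) ≤ Real.log (M + 1) := by
  have hz : ∀ n ∉ Finset.range (M + 1), Real.negMulLog (p n) = 0 := by
    intro n hn
    rw [Finset.mem_range, not_lt] at hn
    rw [hs n (by omega)]; simp
  refine ⟨summable_of_ne_finset_zero hz, ?_⟩
  rw [tsum_eq_sum hz]
  have hsum1 : ∑ i ∈ Finset.range (M + 1), p i = 1 := by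
    have := h1.tsum_eq
    rw [tsum_eq_sum (s := Finset.range (M + 1)) (fun n hn => hs n (by
      rw [Finset.mem_range, not_lt] at hn; omega))] at this
    exact this
  have := sum_negMulLog_le_log_card (s := Finset.range (M + 1)) (fun i _ => h0 i) hsum1
  simpa using this

end

open Real

/-- entropy of a finite mixture -/
lemma entropy_mixture {s : Finset ℕ} {w : ℕ → ℝ} {q : ℕ → ℕ → ℝ}
    (hw0 : ∀ j ∈ s, 0 ≤ w j) (hw1 : ∑ j ∈ s, w j = 1)
    (hq0 : ∀ j ∈ s, ∀ m, 0 ≤ q j m) (hq1 : ∀ j ∈ s, HasSum (q j) 1)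
    (hqe : ∀ j ∈ s, Summable fun m => Real.negMulLog (q j m)) :
    Summable (fun m => Real.negMulLog (∑ j ∈ s, w j * q j m)) ∧
    ∑' m, Real.negMulLog (∑ j ∈ s, w j * q j m) ≤
      (∑ j ∈ s, Real.negMulLog (w j)) + ∑ j ∈ s, w j * ∑' m, Real.negMulLog (q j m) := by
  set p : ℕ → ℝ := fun m => ∑ j ∈ s, w j * q j m with hp
  have hp0 : ∀ m, 0 ≤ p m := fun m =>
    Finset.sum_nonneg fun j hj => mul_nonneg (hw0 j hj) (hq0 j hj m)
  have hpsum : HasSum p 1 := by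
    have h := hasSum_sum (s := s) (f := fun j m => w j * q j m) (a := fun j => w j * 1)
      (fun j hj => (hq1 j hj).mul_left (w j))
    simpa [hw1] using h
  have hp1 : ∀ m, p m ≤ 1 := fun m => le_hasSum hpsum m fun j _ => hp0 j
  set g : ℕ → ℝ := fun m => ∑ j ∈ s, (q j m * Real.negMulLog (w j) + w j * Real.negMulLog (q j m))
    with hg
  have hgs : Summable g := by
    refine summable_sum fun j hj => Summable.add ?_ ?_
    · exact ((hq1 j hj).summable.mul_right _)
    · exact (hqe j hj).mul_left _
  have hpt : ∀ m, Real.negMulLog (p m) ≤ g m := by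
    intro m
    refine (negMulLog_sum_le s (fun j => w j * q j m)
      (fun j hj => mul_nonneg (hw0 j hj) (hq0 j hj m))).trans (le_of_eq ?_)
    exact Finset.sum_congr rfl fun j _ => Real.negMulLog_mul _ _
  have hps : Summable fun m => Real.negMulLog (p m) :=
    Summable.of_nonneg_of_le (fun m => Real.negMulLog_nonneg (hp0 m) (hp1 m)) hpt hgs
  refine ⟨hps, (Summable.tsum_le_tsum hpt hps hgs).trans (le_of_eq ?_)⟩
  rw [hg, Summable.tsum_finsetSum (fun j hj => Summable.add ((hq1 j hj).summable.mul_right _)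
    ((hqe j hj).mul_left _)), ← Finset.sum_add_distrib]
  refine Finset.sum_congr rfl fun j hj => ?_
  rw [Summable.tsum_add ((hq1 j hj).summable.mul_right _) ((hqe j hj).mul_left _),
    tsum_mul_right, tsum_mul_left, (hq1 j hj).tsum_eq, one_mul]

/-- binomial mean -/
lemma binom_mean (x y : ℝ) (hxy : x + y = 1) {k : ℕ} (hk : 1 ≤ k) :
    ∑ j ∈ Finset.range (k + 1), (j : ℝ) * (x ^ j * y ^ (k - j) * (k.choose j : ℝ)) = k * x := by
  obtain ⟨s, rfl⟩ : ∃ s, k = s + 1 := ⟨k - 1, by omega⟩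
  rw [Finset.sum_range_succ']
  simp only [Nat.cast_zero, zero_mul, add_zero]
  have key : ∀ i ∈ Finset.range (s + 1),
      ((i : ℝ) + 1) * (x ^ (i + 1) * y ^ (s - i) * ((s+1).choose (i+1) : ℝ))
      = ((s : ℝ) + 1) * x * (x ^ i * y ^ (s - i) * (s.choose i : ℝ)) := by
    intro i _
    have hc : (s + 1) * s.choose i = (s+1).choose (i+1) * (i+1) := Nat.add_one_mul_choose_eq s i
    have hc' : ((s : ℝ) + 1) * (s.choose i : ℝ) = ((s+1).choose (i+1) : ℝ) * ((i : ℝ) + 1) := by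
      exact_mod_cast congrArg (Nat.cast (R := ℝ)) hc
    rw [pow_succ]
    linear_combination (-(x ^ i * x * y ^ (s - i))) * hc'
  push_cast
  rw [Finset.sum_congr rfl key, ← Finset.mul_sum, ← add_pow x y s, hxy, one_pow, mul_one]

/-- power series correspondence -/
lemma conv_coeff (a b : ℕ → ℝ) (n : ℕ) :
    conv a b n = PowerSeries.coeff n (PowerSeries.mk a * PowerSeries.mk b) := by
  rw [PowerSeries.coeff_mul,
    Finset.Nat.sum_antidiagonal_eq_sum_range_succ_mk
      (fun p => PowerSeries.coeff p.1 (PowerSeries.mk a) * PowerSeries.coeff p.2 (PowerSeries.mk b)) n]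
  simp [conv, PowerSeries.coeff_mk]

lemma iterConv_coeff (a : ℕ → ℝ) (k : ℕ) :
    ∀ n, iterConv a k n = PowerSeries.coeff n ((PowerSeries.mk a) ^ k) := by
  induction k with
  | zero => intro n; simp only [iterConv, pow_zero, PowerSeries.coeff_one]
  | succ k ih =>
      intro n
      have hmk : PowerSeries.mk (iterConv a k) = (PowerSeries.mk a) ^ k := by
        ext m; rw [PowerSeries.coeff_mk, ih m]
      show conv (iterConv a k) a n = _
      rw [conv_coeff, hmk, ← pow_succ]


open Real in
/-- The key entropy bound for the iterated convolution. -/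
lemma Hk_bound {θ : ℕ → ℝ} (h0 : ∀ n, 0 ≤ θ n) (h1 : HasSum θ 1)
    (he : Summable fun n => Real.negMulLog (θ n)) (N : ℕ) {k : ℕ} (hk : 1 ≤ k)
    (hη : 0 < ∑ i ∈ Finset.range (N + 1), θ i) :
    ∑' m, Real.negMulLog (iterConv θ k m) ≤
      Real.log ((k : ℝ) + 1) + Real.log ((k : ℝ) * N + 1)
        + k * ∑' n, (if N < n then Real.negMulLog (θ n) else 0) := by
  classical
  set η : ℝ := ∑ i ∈ Finset.range (N + 1), θ i with hηdef
  set ε : ℝ := 1 - η with hεdef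
  set hd : ℕ → ℝ := fun n => if n ≤ N then θ n else 0 with hhddef
  set t : ℕ → ℝ := fun n => if N < n then θ n else 0 with htdef
  set tailfn : ℕ → ℝ := fun n => if N < n then Real.negMulLog (θ n) else 0 with htailfn
  have hθ1 : ∀ n, θ n ≤ 1 := fun n => le_hasSum h1 n fun j _ => h0 j
  have hnml0 : ∀ n, 0 ≤ Real.negMulLog (θ n) := fun n => Real.negMulLog_nonneg (h0 n) (hθ1 n)
  have hhead : HasSum hd η := by
    have h := hasSum_sum_of_ne_finset_zero (L := SummationFilter.unconditional ℕ) (s := Finset.range (N + 1)) (f := hd)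
      (by intro b hb; rw [Finset.mem_range, not_lt] at hb; simp only [hhddef]
          rw [if_neg (by omega)])
    have heq : ∑ b ∈ Finset.range (N + 1), hd b = η := by
      refine Finset.sum_congr rfl fun i hi => ?_
      rw [Finset.mem_range] at hi
      simp only [hhddef]; rw [if_pos (by omega)]
    rwa [heq] at h
  have ht : HasSum t ε := by
    have hpt : ∀ n, t n = θ n - hd n := by
      intro n; simp only [htdef, hhddef]
      by_cases h : n ≤ N
      · rw [if_neg (by omega), if_pos h]; ring
      · rw [if_pos (by omega), if_neg h]; ring
    have := h1.sub hhead
    simpa only [← hpt] using this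
  have ht0 : ∀ n, 0 ≤ t n := by
    intro n; simp only [htdef]; split
    · exact h0 n
    · exact le_rfl
  have hε0 : 0 ≤ ε := hasSum_le (fun n => ht0 n) hasSum_zero ht
  have hε1 : ε ≤ 1 := by
    have : 0 ≤ η := hη.le
    simp only [hεdef]; linarith
  have hnmlt : ∀ n, Real.negMulLog (t n) = tailfn n := by
    intro n; simp only [htdef, htailfn]; split <;> simp
  have hnt : Summable tailfn := by
    refine Summable.of_nonneg_of_le (fun n => ?_) (fun n => ?_) he
    · simp only [htailfn]; split
      · exact hnml0 n
      · exact le_rfl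
    · simp only [htailfn]; split
      · exact le_rfl
      · exact hnml0 n
  have htail0 : 0 ≤ ∑' n, tailfn n := by
    refine tsum_nonneg fun n => ?_
    simp only [htailfn]; split
    · exact hnml0 n
    · exact le_rfl
  -- the two normalized components
  set α' : ℕ → ℝ := fun n => hd n / η with hα'def
  set β' : ℕ → ℝ := if ε = 0 then (fun m => if m = 0 then (1:ℝ) else 0) else fun n => t n / ε
    with hβ'def
  have hα'0 : ∀ n, 0 ≤ α' n := by
    intro n; simp only [hα'def, hhddef]
    refine div_nonneg ?_ hη.le
    split
    · exact h0 n
    · exact le_rfl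
  have hα'sum : HasSum α' 1 := by
    have := hhead.div_const η
    rwa [div_self (ne_of_gt hη)] at this
  have hα'supp : ∀ n, N < n → α' n = 0 := by
    intro n hn; simp only [hα'def, hhddef]; rw [if_neg (by omega), zero_div]
  have hα'ent : Summable fun n => Real.negMulLog (α' n) := by
    refine summable_of_ne_finset_zero (s := Finset.range (N + 1)) fun n hn => ?_
    rw [Finset.mem_range, not_lt] at hn
    rw [hα'supp n (by omega)]; simp
  have hβ'0 : ∀ n, 0 ≤ β' n := by
    intro n
    by_cases hε : ε = 0
    · simp only [hβ'def, if_pos hε]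
      split <;> norm_num
    · simp only [hβ'def, if_neg hε]
      exact div_nonneg (ht0 n) hε0
  have hβ'sum : HasSum β' 1 := by
    by_cases hε : ε = 0
    · simp only [hβ'def, if_pos hε]
      simpa using hasSum_ite_eq (0 : ℕ) (1 : ℝ)
    · simp only [hβ'def, if_neg hε]
      have := ht.div_const ε
      rwa [div_self hε] at this
  have hβ'ent : Summable (fun n => Real.negMulLog (β' n)) ∧
      ε * ∑' n, Real.negMulLog (β' n) ≤ ∑' n, tailfn n := by
    by_cases hε : ε = 0
    · constructor
      · refine summable_of_ne_finset_zero (s := {0}) fun n hn => ?_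
        simp only [hβ'def, if_pos hε]
        rw [if_neg (by simpa using hn)]; simp
      · rw [hε, zero_mul]; exact htail0
    · have hεpos : 0 < ε := lt_of_le_of_ne hε0 (Ne.symm hε)
      have hre : ∀ n, Real.negMulLog (β' n)
          = t n * Real.negMulLog ε⁻¹ + ε⁻¹ * tailfn n := by
        intro n
        simp only [hβ'def, if_neg hε]
        rw [div_eq_inv_mul, Real.negMulLog_mul, hnmlt]
      have hs1 : Summable fun n => t n * Real.negMulLog ε⁻¹ := ht.summable.mul_right _
      have hs2 : Summable fun n => ε⁻¹ * tailfn n := hnt.mul_left _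
      have hsum : Summable fun n => Real.negMulLog (β' n) := by
        rw [funext hre]; exact hs1.add hs2
      refine ⟨hsum, ?_⟩
      have htsum : ∑' n, Real.negMulLog (β' n)
          = ε * Real.negMulLog ε⁻¹ + ε⁻¹ * ∑' n, tailfn n := by
        rw [funext hre, Summable.tsum_add hs1 hs2, tsum_mul_right, tsum_mul_left, ht.tsum_eq]
      rw [htsum]
      have hA : ε * (ε * Real.negMulLog ε⁻¹ + ε⁻¹ * ∑' n, tailfn n)
          = ε ^ 2 * Real.negMulLog ε⁻¹ + ∑' n, tailfn n := by
        field_simp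
      rw [hA]
      have hnmlε : Real.negMulLog ε⁻¹ ≤ 0 := by
        have hlog : 0 ≤ Real.log ε⁻¹ := by
          rw [Real.log_inv]
          have := Real.log_nonpos hε0 hε1
          linarith
        rw [Real.negMulLog, neg_mul]
        have : 0 ≤ ε⁻¹ * Real.log ε⁻¹ := mul_nonneg (by positivity) hlog
        linarith
      have : ε ^ 2 * Real.negMulLog ε⁻¹ ≤ 0 :=
        mul_nonpos_of_nonneg_of_nonpos (sq_nonneg ε) hnmlε
      linarith
  have hβ'H0 : 0 ≤ ∑' n, Real.negMulLog (β' n) :=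
    tsum_nonneg fun n => Real.negMulLog_nonneg (hβ'0 n)
      (le_hasSum hβ'sum n fun j _ => hβ'0 j)
  have hdecomp_fun : ∀ n, θ n = η * α' n + ε * β' n := by
    intro n
    by_cases hε : ε = 0
    · have ht0' : t = 0 := (hasSum_zero_iff_of_nonneg ht0).1 (hε ▸ ht)
      have hθhd : θ n = hd n := by
        simp only [hhddef]
        by_cases h : n ≤ N
        · rw [if_pos h]
        · rw [if_neg h]
          have := congrFun ht0' n
          simp only [htdef, Pi.zero_apply] at this
          rw [← this, if_pos (by omega)]
      rw [hε, zero_mul, add_zero, hα'def]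
      rw [mul_div_cancel₀ _ (ne_of_gt hη)] at *
      · exact hθhd
    · simp only [hα'def, hβ'def, if_neg hε]
      rw [mul_div_cancel₀ _ (ne_of_gt hη), mul_div_cancel₀ _ hε]
      simp only [hhddef, htdef]
      by_cases h : n ≤ N
      · rw [if_pos h, if_neg (by omega)]; ring
      · rw [if_neg h, if_pos (by omega)]; ring
  -- power series decomposition
  set A : PowerSeries ℝ := PowerSeries.mk α' with hA
  set B : PowerSeries ℝ := PowerSeries.mk β' with hB
  set w : ℕ → ℝ := fun j => η ^ j * ε ^ (k - j) * (k.choose j : ℝ) with hw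
  set q : ℕ → ℕ → ℝ := fun j => conv (iterConv α' j) (iterConv β' (k - j)) with hqdef
  have hAj : ∀ j : ℕ, PowerSeries.mk (iterConv α' j) = A ^ j := by
    intro j; ext m; rw [PowerSeries.coeff_mk, iterConv_coeff, hA]
  have hBj : ∀ j : ℕ, PowerSeries.mk (iterConv β' j) = B ^ j := by
    intro j; ext m; rw [PowerSeries.coeff_mk, iterConv_coeff, hB]
  have hq : ∀ j m, q j m = PowerSeries.coeff m (A ^ j * B ^ (k - j)) := by
    intro j m
    show conv (iterConv α' j) (iterConv β' (k - j)) m = _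
    rw [conv_coeff, hAj, hBj]
  have hmkθ : PowerSeries.mk θ = PowerSeries.C η * A + PowerSeries.C ε * B := by
    ext n
    rw [PowerSeries.coeff_mk, map_add, PowerSeries.coeff_C_mul, PowerSeries.coeff_C_mul,
      hA, hB, PowerSeries.coeff_mk, PowerSeries.coeff_mk]
    exact hdecomp_fun n
  have hiter : ∀ m, iterConv θ k m = ∑ j ∈ Finset.range (k + 1), w j * q j m := by
    intro m
    rw [iterConv_coeff θ k m, hmkθ, add_pow, map_sum]
    refine Finset.sum_congr rfl fun j hj => ?_
    have hterm : (PowerSeries.C η * A) ^ j * (PowerSeries.C ε * B) ^ (k - j)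
        * ((k.choose j : ℕ) : PowerSeries ℝ)
        = PowerSeries.C (w j) * (A ^ j * B ^ (k - j)) := by
      rw [mul_pow, mul_pow, ← map_pow, ← map_pow, ← map_natCast (PowerSeries.C (R := ℝ)) (k.choose j),
        hw]
      rw [map_mul, map_mul]
      ring
    rw [hterm, PowerSeries.coeff_C_mul, hq]
  -- probability facts for the components
  have hxy : η + ε = 1 := by rw [hεdef]; ring
  have hw0 : ∀ j ∈ Finset.range (k + 1), 0 ≤ w j := by
    intro j _
    exact mul_nonneg (mul_nonneg (pow_nonneg hη.le j) (pow_nonneg hε0 _)) (by positivity)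
  have hw1 : ∑ j ∈ Finset.range (k + 1), w j = 1 := by
    have := add_pow η ε k
    rw [hxy, one_pow] at this
    exact this.symm
  have hqa : ∀ j, HasSum (iterConv α' j) 1 := iter_hasSum hα'0 hα'sum
  have hqb : ∀ j, HasSum (iterConv β' j) 1 := iter_hasSum hβ'0 hβ'sum
  have hq1 : ∀ j ∈ Finset.range (k + 1), HasSum (q j) 1 := by
    intro j _
    have := hasSum_conv (iter_nonneg hα'0 j) (iter_nonneg hβ'0 (k - j)) (hqa j) (hqb (k - j))
    rwa [one_mul] at this
  have hq0 : ∀ j ∈ Finset.range (k + 1), ∀ m, 0 ≤ q j m := fun j _ m =>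
    conv_nonneg' (iter_nonneg hα'0 j) (iter_nonneg hβ'0 (k - j)) m
  have hentq : ∀ j ∈ Finset.range (k + 1),
      Summable (fun m => Real.negMulLog (q j m)) ∧
      ∑' m, Real.negMulLog (q j m) ≤
        Real.log ((k : ℝ) * N + 1) + ((k - j : ℕ) : ℝ) * ∑' n, Real.negMulLog (β' n) := by
    intro j hj
    rw [Finset.mem_range] at hj
    have hja := iter_entropy hα'0 hα'sum hα'ent j
    have hjb := iter_entropy hβ'0 hβ'sum hβ'ent.1 (k - j)
    have hec := entropy_conv (iter_nonneg hα'0 j) (iter_nonneg hβ'0 (k - j)) (hqa j)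
      (hqb (k - j)) hja.1 hjb.1
    refine ⟨hec.1, hec.2.trans ?_⟩
    have hHa : ∑' m, Real.negMulLog (iterConv α' j m) ≤ Real.log ((k : ℝ) * N + 1) := by
      have hsupp := iter_support hα'supp j
      have := (entropy_of_support (iter_nonneg hα'0 j) (hqa j) hsupp).2
      refine this.trans ?_
      refine Real.log_le_log (by positivity) ?_
      have : (j : ℝ) * N ≤ (k : ℝ) * N := by
        have : (j:ℝ) ≤ k := by exact_mod_cast Nat.lt_succ_iff.mp hj
        nlinarith [Nat.cast_nonneg (α := ℝ) N]
      push_cast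
      linarith
    exact add_le_add hHa hjb.2
  have hmix := entropy_mixture hw0 hw1 hq0 hq1 (fun j hj => (hentq j hj).1)
  -- put it all together
  have hts : ∑' m, Real.negMulLog (iterConv θ k m)
      = ∑' m, Real.negMulLog (∑ j ∈ Finset.range (k + 1), w j * q j m) :=
    tsum_congr fun m => by rw [hiter m]
  rw [hts]
  refine hmix.2.trans ?_
  have hterm1 : ∑ j ∈ Finset.range (k + 1), Real.negMulLog (w j) ≤ Real.log ((k : ℝ) + 1) := by
    have := sum_negMulLog_le_log_card hw0 hw1
    rw [Finset.card_range] at this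
    refine this.trans (le_of_eq ?_)
    push_cast
    rfl
  have hterm2 : ∑ j ∈ Finset.range (k + 1), w j * ∑' m, Real.negMulLog (q j m)
      ≤ Real.log ((k : ℝ) * N + 1) + k * ∑' n, tailfn n := by
    have hstep : ∑ j ∈ Finset.range (k + 1), w j * ∑' m, Real.negMulLog (q j m)
        ≤ ∑ j ∈ Finset.range (k + 1), w j * (Real.log ((k : ℝ) * N + 1)
            + ((k - j : ℕ) : ℝ) * ∑' n, Real.negMulLog (β' n)) := by
      refine Finset.sum_le_sum fun j hj => ?_
      exact mul_le_mul_of_nonneg_left (hentq j hj).2 (hw0 j hj)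
    refine hstep.trans ?_
    have hsplit : ∑ j ∈ Finset.range (k + 1), w j * (Real.log ((k : ℝ) * N + 1)
        + ((k - j : ℕ) : ℝ) * ∑' n, Real.negMulLog (β' n))
        = Real.log ((k : ℝ) * N + 1)
          + (∑ j ∈ Finset.range (k + 1), ((k - j : ℕ) : ℝ) * w j)
            * ∑' n, Real.negMulLog (β' n) := by
      have hexp : ∀ j ∈ Finset.range (k + 1),
          w j * (Real.log ((k : ℝ) * N + 1) + ((k - j : ℕ) : ℝ) * ∑' n, Real.negMulLog (β' n))
          = w j * Real.log ((k : ℝ) * N + 1)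
            + ((k - j : ℕ) : ℝ) * w j * ∑' n, Real.negMulLog (β' n) := fun j _ => by ring
      rw [Finset.sum_congr rfl hexp, Finset.sum_add_distrib, ← Finset.sum_mul, hw1, one_mul,
        ← Finset.sum_mul]
    rw [hsplit]
    have hmean : ∑ j ∈ Finset.range (k + 1), ((k - j : ℕ) : ℝ) * w j = k * ε := by
      have hmean1 : ∑ j ∈ Finset.range (k + 1), (j : ℝ) * w j = k * η := by
        exact binom_mean η ε hxy hk
      have hcast : ∀ j ∈ Finset.range (k + 1), ((k - j : ℕ) : ℝ) * w j
          = (k : ℝ) * w j - (j : ℝ) * w j := by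
        intro j hj
        rw [Finset.mem_range] at hj
        have : ((k - j : ℕ) : ℝ) = (k : ℝ) - j := by
          have : j ≤ k := by omega
          push_cast [this]
          ring
        rw [this]; ring
      rw [Finset.sum_congr rfl hcast, Finset.sum_sub_distrib, ← Finset.mul_sum, hw1, hmean1]
      rw [hεdef]; ring
    rw [hmean]
    have : (k : ℝ) * ε * ∑' n, Real.negMulLog (β' n) ≤ (k : ℝ) * ∑' n, tailfn n := by
      have h2 : ε * ∑' n, Real.negMulLog (β' n) ≤ ∑' n, tailfn n := hβ'ent.2
      have hk0 : (0:ℝ) ≤ k := Nat.cast_nonneg k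
      calc (k : ℝ) * ε * ∑' n, Real.negMulLog (β' n)
          = (k:ℝ) * (ε * ∑' n, Real.negMulLog (β' n)) := by ring
        _ ≤ (k:ℝ) * ∑' n, tailfn n := mul_le_mul_of_nonneg_left h2 hk0
    linarith
  calc (∑ j ∈ Finset.range (k + 1), Real.negMulLog (w j))
      + ∑ j ∈ Finset.range (k + 1), w j * ∑' m, Real.negMulLog (q j m)
      ≤ Real.log ((k : ℝ) + 1) + (Real.log ((k : ℝ) * N + 1) + k * ∑' n, tailfn n) :=
        add_le_add hterm1 hterm2
    _ = _ := by rw [htailfn]; ring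

open Real Asymptotics in
lemma log_lin_div_tendsto (a b : ℝ) (ha : 0 ≤ a) (hb : 1 ≤ b) :
    Tendsto (fun k : ℕ => Real.log (a * k + b) / k) atTop (nhds 0) := by
  rcases ha.eq_or_lt with h | h
  · simp only [← h, zero_mul, zero_add]
    exact (tendsto_const_div_atTop_nhds_zero_nat (Real.log b))
  · have hu : Tendsto (fun k : ℕ => a * k + b) atTop atTop := by
      refine Tendsto.atTop_add ?_ tendsto_const_nhds
      exact (tendsto_natCast_atTop_atTop (R := ℝ)).const_mul_atTop h
    have hlog : (fun k : ℕ => Real.log (a * k + b)) =o[atTop] fun k : ℕ => a * k + b :=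
      Real.isLittleO_log_id_atTop.comp_tendsto hu
    have hbig : (fun k : ℕ => a * (k:ℝ) + b) =O[atTop] fun k : ℕ => (k : ℝ) := by
      refine IsBigO.of_bound (a + b) ?_
      filter_upwards [eventually_ge_atTop 1] with k hk
      have hk1 : (1:ℝ) ≤ (k:ℝ) := by exact_mod_cast hk
      rw [Real.norm_eq_abs, Real.norm_eq_abs, abs_of_nonneg (by positivity),
        abs_of_nonneg (by positivity)]
      nlinarith
    exact (hlog.trans_isBigO hbig).tendsto_div_nhds_zero

open Real in
/-- Main result on the ℕ side. -/
lemma nat_main {θ : ℕ → ℝ} (h0 : ∀ n, 0 ≤ θ n) (h1 : HasSum θ 1)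
    (he : Summable fun n => Real.negMulLog (θ n)) :
    Tendsto (fun k : ℕ => (∑' n, Real.negMulLog (iterConv θ k n)) / k) atTop (nhds 0) := by
  -- nonnegativity of entropies
  have hθ1 : ∀ n, θ n ≤ 1 := fun n => le_hasSum h1 n fun j _ => h0 j
  have hHk0 : ∀ k, 0 ≤ ∑' n, Real.negMulLog (iterConv θ k n) := by
    intro k
    refine tsum_nonneg fun n => Real.negMulLog_nonneg (iter_nonneg h0 k n) ?_
    exact le_hasSum (iter_hasSum h0 h1 k) n fun j _ => iter_nonneg h0 k j
  -- tail entropy tends to zero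
  set T : ℕ → ℝ := fun N => ∑' n, (if N < n then Real.negMulLog (θ n) else 0) with hT
  have hTeq : ∀ N, T N = (∑' n, Real.negMulLog (θ n))
      - ∑ i ∈ Finset.range (N + 1), Real.negMulLog (θ i) := by
    intro N
    have hhd : Summable (fun n => if n ≤ N then Real.negMulLog (θ n) else 0) :=
      summable_of_ne_finset_zero (s := Finset.range (N + 1)) (by
        intro n hn; rw [Finset.mem_range, not_lt] at hn; rw [if_neg (by omega)])
    have hpt : ∀ n, (if N < n then Real.negMulLog (θ n) else 0)
        = Real.negMulLog (θ n) - (if n ≤ N then Real.negMulLog (θ n) else 0) := by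
      intro n
      by_cases h : n ≤ N
      · rw [if_neg (by omega), if_pos h]; ring
      · rw [if_pos (by omega), if_neg h]; ring
    rw [hT]
    simp only [hpt]
    rw [Summable.tsum_sub he hhd]
    congr 1
    rw [tsum_eq_sum (s := Finset.range (N + 1)) (by
      intro n hn; rw [Finset.mem_range, not_lt] at hn; rw [if_neg (by omega)])]
    refine Finset.sum_congr rfl fun i hi => ?_
    rw [Finset.mem_range] at hi
    rw [if_pos (by omega)]
  have hTtend : Tendsto T atTop (nhds 0) := by
    have hps : Tendsto (fun N => ∑ i ∈ Finset.range (N + 1), Real.negMulLog (θ i)) atTop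
        (nhds (∑' n, Real.negMulLog (θ n))) :=
      (he.hasSum.tendsto_sum_nat).comp (tendsto_add_atTop_nat 1)
    have := (tendsto_const_nhds (x := ∑' n, Real.negMulLog (θ n)) (f := atTop)).sub hps
    rw [sub_self] at this
    exact (funext hTeq : T = _) ▸ this
  -- a positive mass point
  obtain ⟨n₀, hn₀⟩ : ∃ n₀, 0 < θ n₀ := by
    by_contra h
    push_neg at h
    have : ∀ n, θ n = 0 := fun n => le_antisymm (h n) (h0 n)
    have : HasSum θ 0 := by
      rw [funext this]; exact hasSum_zero
    exact (one_ne_zero (α := ℝ)) (h1.unique this)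
  rw [Metric.tendsto_atTop]
  intro δ hδ
  -- choose N
  have hev : ∀ᶠ N in atTop, T N < δ / 2 := hTtend.eventually_lt_const (by linarith)
  obtain ⟨N, hN1, hN2⟩ := (hev.and (eventually_ge_atTop n₀)).exists
  have hηpos : 0 < ∑ i ∈ Finset.range (N + 1), θ i := by
    refine lt_of_lt_of_le hn₀ ?_
    exact Finset.single_le_sum (fun i _ => h0 i) (Finset.mem_range.2 (by omega))
  -- choose K
  have hrate : Tendsto (fun k : ℕ => Real.log ((k:ℝ) + 1) / k
      + Real.log ((k:ℝ) * N + 1) / k) atTop (nhds 0) := by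
    have t1 := log_lin_div_tendsto 1 1 zero_le_one le_rfl
    have t2 := log_lin_div_tendsto (N : ℝ) 1 (Nat.cast_nonneg N) le_rfl
    simp only [one_mul] at t1
    have h3 := t1.add t2
    rw [add_zero] at h3
    simp only [mul_comm ((N:ℕ) : ℝ)] at h3
    exact h3
  have hev2 : ∀ᶠ k : ℕ in atTop, Real.log ((k:ℝ) + 1) / k
      + Real.log ((k:ℝ) * N + 1) / k < δ / 2 := hrate.eventually_lt_const (by linarith)
  obtain ⟨K, hK⟩ := (hev2.and (eventually_ge_atTop 1)).exists_forall_of_atTop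
  refine ⟨K, fun k hk => ?_⟩
  obtain ⟨hkrate, hk1⟩ := hK k hk
  have hkpos : (0:ℝ) < k := by exact_mod_cast hk1
  have hbound := Hk_bound h0 h1 he N hk1 hηpos
  have hfinal : (∑' n, Real.negMulLog (iterConv θ k n)) / k
      ≤ Real.log ((k:ℝ) + 1) / k + Real.log ((k:ℝ) * N + 1) / k + T N := by
    have hdiv : (∑' n, Real.negMulLog (iterConv θ k n)) / k
        ≤ (Real.log ((k : ℝ) + 1) + Real.log ((k : ℝ) * N + 1)
            + k * ∑' n, (if N < n then Real.negMulLog (θ n) else 0)) / k := by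
      gcongr
    refine hdiv.trans (le_of_eq ?_)
    have hTN : (∑' (n : ℕ), if N < n then Real.negMulLog (θ n) else 0) = T N := rfl
    rw [hTN]
    field_simp
  rw [Real.dist_eq, sub_zero, abs_of_nonneg (div_nonneg (hHk0 k) hkpos.le)]
  calc (∑' n, Real.negMulLog (iterConv θ k n)) / k
      ≤ Real.log ((k:ℝ) + 1) / k + Real.log ((k:ℝ) * N + 1) / k + T N := hfinal
    _ < δ / 2 + δ / 2 := by linarith
    _ = δ := by ring

open scoped Classical

lemma tsum_subtype_ite {α β : Type*} [AddCommMonoid α] [TopologicalSpace α]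
    (f : β → α) (P : β → Prop) :
    ∑' x : {x // P x}, f x.1 = ∑' x, if P x then f x else 0 := by
  refine (tsum_subtype {x | P x} f).trans (tsum_congr fun x => ?_)
  by_cases h : P x <;> simp [Set.indicator_apply, h]

section Monoid
variable {W : Type*}

open ENNReal

lemma pushLen_nonneg {ν : FreeMonoid W → ℝ} (h0 : ∀ x, 0 ≤ ν x) (n : ℕ) : 0 ≤ pushLen ν n :=
  tsum_nonneg fun x => h0 x.1

lemma mconv_nonneg {a b : FreeMonoid W → ℝ} (ha0 : ∀ x, 0 ≤ a x) (hb0 : ∀ x, 0 ≤ b x)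
    (x : FreeMonoid W) : 0 ≤ mconv a b x :=
  tsum_nonneg fun p => mul_nonneg (ha0 _) (hb0 _)

lemma ofReal_pushLen {ν : FreeMonoid W → ℝ} (h0 : ∀ x, 0 ≤ ν x) (hs : Summable ν) (n : ℕ) :
    ENNReal.ofReal (pushLen ν n)
      = ∑' x : FreeMonoid W, if FreeMonoid.length x = n then ENNReal.ofReal (ν x) else 0 := by
  have hsub : Summable (fun x : {x : FreeMonoid W // FreeMonoid.length x = n} => ν x.1) :=
    hs.subtype _
  calc ENNReal.ofReal (pushLen ν n)
      = ∑' x : {x : FreeMonoid W // FreeMonoid.length x = n}, ENNReal.ofReal (ν x.1) :=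
        ENNReal.ofReal_tsum_of_nonneg (fun x => h0 x.1) hsub
    _ = _ := by
        refine (tsum_subtype_ite (fun x => ENNReal.ofReal (ν x))
          (fun x => FreeMonoid.length x = n)).trans (tsum_congr fun x => ?_)
        by_cases h : FreeMonoid.length x = n <;> simp [h]

lemma ofReal_mconv {a b : FreeMonoid W → ℝ} (ha0 : ∀ x, 0 ≤ a x) (hb0 : ∀ x, 0 ≤ b x)
    (hsa : Summable a) (hsb : Summable b) (x : FreeMonoid W) :
    ENNReal.ofReal (mconv a b x)
      = ∑' p : FreeMonoid W × FreeMonoid W,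
          if p.1 * p.2 = x then ENNReal.ofReal (a p.1) * ENNReal.ofReal (b p.2) else 0 := by
  have hprod : Summable (fun p : FreeMonoid W × FreeMonoid W => a p.1 * b p.2) :=
    hsa.mul_of_nonneg hsb (fun p => ha0 p) (fun p => hb0 p)
  have hsub : Summable (fun p : {p : FreeMonoid W × FreeMonoid W // p.1 * p.2 = x} =>
      a p.1.1 * b p.1.2) := hprod.subtype _
  calc ENNReal.ofReal (mconv a b x)
      = ∑' p : {p : FreeMonoid W × FreeMonoid W // p.1 * p.2 = x},
          ENNReal.ofReal (a p.1.1 * b p.1.2) :=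
        ENNReal.ofReal_tsum_of_nonneg (fun p => mul_nonneg (ha0 _) (hb0 _)) hsub
    _ = ∑' p : FreeMonoid W × FreeMonoid W,
          if p.1 * p.2 = x then ENNReal.ofReal (a p.1 * b p.2) else 0 :=
        tsum_subtype_ite (fun p : FreeMonoid W × FreeMonoid W => ENNReal.ofReal (a p.1 * b p.2))
          (fun p : FreeMonoid W × FreeMonoid W => p.1 * p.2 = x)
    _ = _ := by
        refine tsum_congr fun p => ?_
        by_cases h : p.1 * p.2 = x <;> simp [h, ENNReal.ofReal_mul (ha0 p.1)]

/-- total mass of `mconv` in `ℝ≥0∞` -/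
lemma mconv_facts {a b : FreeMonoid W → ℝ} (ha0 : ∀ x, 0 ≤ a x) (hb0 : ∀ x, 0 ≤ b x)
    (hsa : Summable a) (hsb : Summable b) :
    Summable (mconv a b) ∧
      ∑' x, ENNReal.ofReal (mconv a b x)
        = (∑' x, ENNReal.ofReal (a x)) * ∑' x, ENNReal.ofReal (b x) := by
  classical
  have htot : ∑' x, ENNReal.ofReal (mconv a b x)
      = (∑' x, ENNReal.ofReal (a x)) * ∑' x, ENNReal.ofReal (b x) := by
    rw [tsum_congr (ofReal_mconv ha0 hb0 hsa hsb)]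
    rw [ENNReal.tsum_comm (f := fun (x : FreeMonoid W) (p : FreeMonoid W × FreeMonoid W) =>
      if p.1 * p.2 = x then ENNReal.ofReal (a p.1) * ENNReal.ofReal (b p.2) else 0)]
    have hcol : ∀ p : FreeMonoid W × FreeMonoid W,
        (∑' x : FreeMonoid W,
          if p.1 * p.2 = x then ENNReal.ofReal (a p.1) * ENNReal.ofReal (b p.2) else 0)
        = ENNReal.ofReal (a p.1) * ENNReal.ofReal (b p.2) := by
      intro p
      rw [tsum_eq_single (p.1 * p.2) (fun x hx => if_neg fun h => hx h.symm)]
      rw [if_pos rfl]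
    rw [tsum_congr hcol, ENNReal.tsum_prod']
    show ∑' (x : FreeMonoid W) (y : FreeMonoid W),
        ENNReal.ofReal (a x) * ENNReal.ofReal (b y) = _
    calc ∑' (x : FreeMonoid W) (y : FreeMonoid W), ENNReal.ofReal (a x) * ENNReal.ofReal (b y)
        = ∑' x : FreeMonoid W, ENNReal.ofReal (a x) * ∑' y : FreeMonoid W, ENNReal.ofReal (b y) :=
          tsum_congr fun x => ENNReal.tsum_mul_left
      _ = _ := ENNReal.tsum_mul_right
  have hfin : ∑' x, ENNReal.ofReal (mconv a b x) ≠ ⊤ := by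
    rw [htot]
    exact ENNReal.mul_ne_top (by
      rw [← ENNReal.ofReal_tsum_of_nonneg ha0 hsa]; exact ENNReal.ofReal_ne_top) (by
      rw [← ENNReal.ofReal_tsum_of_nonneg hb0 hsb]; exact ENNReal.ofReal_ne_top)
  have hsum : Summable (mconv a b) := by
    have := ENNReal.summable_toReal hfin
    refine this.congr fun x => ?_
    exact ENNReal.toReal_ofReal (mconv_nonneg ha0 hb0 x)
  exact ⟨hsum, htot⟩

lemma mconv_hasSum_one {a b : FreeMonoid W → ℝ} (ha0 : ∀ x, 0 ≤ a x) (hb0 : ∀ x, 0 ≤ b x)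
    (ha : HasSum a 1) (hb : HasSum b 1) : HasSum (mconv a b) 1 := by
  obtain ⟨hsum, htot⟩ := mconv_facts ha0 hb0 ha.summable hb.summable
  have h1 : ∑' x, ENNReal.ofReal (a x) = 1 := by
    rw [← ENNReal.ofReal_tsum_of_nonneg ha0 ha.summable, ha.tsum_eq, ENNReal.ofReal_one]
  have h2 : ∑' x, ENNReal.ofReal (b x) = 1 := by
    rw [← ENNReal.ofReal_tsum_of_nonneg hb0 hb.summable, hb.tsum_eq, ENNReal.ofReal_one]
  have htsum : ENNReal.ofReal (∑' x, mconv a b x) = ENNReal.ofReal 1 := by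
    rw [ENNReal.ofReal_tsum_of_nonneg (mconv_nonneg ha0 hb0) hsum, htot, h1, h2,
      ENNReal.ofReal_one, one_mul]
  have : ∑' x, mconv a b x = 1 := by
    rw [ENNReal.ofReal_eq_ofReal_iff (tsum_nonneg (mconv_nonneg ha0 hb0)) zero_le_one] at htsum
    exact htsum
  exact this ▸ hsum.hasSum

lemma pushLen_hasSum_one {ν : FreeMonoid W → ℝ} (h0 : ∀ x, 0 ≤ ν x) (hν : HasSum ν 1) :
    HasSum (pushLen ν) 1 := by
  classical
  have htot : ∑' n, ENNReal.ofReal (pushLen ν n) = 1 := by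
    rw [tsum_congr (ofReal_pushLen h0 hν.summable)]
    rw [ENNReal.tsum_comm (f := fun (n : ℕ) (x : FreeMonoid W) =>
      if FreeMonoid.length x = n then ENNReal.ofReal (ν x) else 0)]
    have hcol : ∀ x : FreeMonoid W,
        (∑' n : ℕ, if FreeMonoid.length x = n then ENNReal.ofReal (ν x) else 0)
          = ENNReal.ofReal (ν x) := by
      intro x
      rw [tsum_eq_single (FreeMonoid.length x) (fun n hn => if_neg fun h => hn h.symm)]
      rw [if_pos rfl]
    rw [tsum_congr hcol, ← ENNReal.ofReal_tsum_of_nonneg h0 hν.summable, hν.tsum_eq,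
      ENNReal.ofReal_one]
  have hsum : Summable (pushLen ν) := by
    have := ENNReal.summable_toReal (htot ▸ ENNReal.one_ne_top)
    refine this.congr fun n => ?_
    exact ENNReal.toReal_ofReal (pushLen_nonneg h0 n)
  have : ∑' n, pushLen ν n = 1 := by
    have h := ENNReal.ofReal_tsum_of_nonneg (pushLen_nonneg h0) hsum
    rw [htot, ← ENNReal.ofReal_one] at h
    rw [ENNReal.ofReal_eq_ofReal_iff (tsum_nonneg (pushLen_nonneg h0)) zero_le_one] at h
    exact h
  exact this ▸ hsum.hasSum

/-- The key `ℝ≥0∞` Fubini computation. -/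
lemma ekey (A B : FreeMonoid W → ℝ≥0∞) (n : ℕ) :
    (∑' x : FreeMonoid W, if FreeMonoid.length x = n then
        (∑' p : FreeMonoid W × FreeMonoid W, if p.1 * p.2 = x then A p.1 * B p.2 else 0) else 0)
    = ∑ i ∈ Finset.range (n + 1),
        (∑' x : FreeMonoid W, if FreeMonoid.length x = i then A x else 0)
          * ∑' x : FreeMonoid W, if FreeMonoid.length x = n - i then B x else 0 := by
  classical
  have h1 : (∑' x : FreeMonoid W, if FreeMonoid.length x = n then
      (∑' p : FreeMonoid W × FreeMonoid W, if p.1 * p.2 = x then A p.1 * B p.2 else 0) else 0)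
      = ∑' (x : FreeMonoid W) (p : FreeMonoid W × FreeMonoid W),
          if FreeMonoid.length x = n then (if p.1 * p.2 = x then A p.1 * B p.2 else 0) else 0 := by
    refine tsum_congr fun x => ?_
    by_cases h : FreeMonoid.length x = n <;> simp [h]
  rw [h1, ENNReal.tsum_comm]
  have h2 : ∀ p : FreeMonoid W × FreeMonoid W,
      (∑' x : FreeMonoid W,
        if FreeMonoid.length x = n then (if p.1 * p.2 = x then A p.1 * B p.2 else 0) else 0)
      = if FreeMonoid.length p.1 + FreeMonoid.length p.2 = n then A p.1 * B p.2 else 0 := by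
    intro p
    have hpt : ∀ x, (if FreeMonoid.length x = n then
        (if p.1 * p.2 = x then A p.1 * B p.2 else 0) else 0)
        = if p.1 * p.2 = x then
            (if FreeMonoid.length p.1 + FreeMonoid.length p.2 = n then A p.1 * B p.2 else 0)
          else 0 := by
      intro x
      by_cases h : p.1 * p.2 = x
      · subst h
        simp [FreeMonoid.length_mul]
      · simp [h]
    rw [tsum_congr hpt, tsum_eq_single (p.1 * p.2) (fun x hx => if_neg fun h => hx h.symm),
      if_pos rfl]
  rw [tsum_congr h2]
  have h3 : ∀ i, (∑' x : FreeMonoid W, if FreeMonoid.length x = i then A x else 0)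
      * (∑' x : FreeMonoid W, if FreeMonoid.length x = n - i then B x else 0)
      = ∑' p : FreeMonoid W × FreeMonoid W,
          (if FreeMonoid.length p.1 = i then A p.1 else 0)
            * (if FreeMonoid.length p.2 = n - i then B p.2 else 0) := by
    intro i
    have step : ∀ x : FreeMonoid W,
        ((if FreeMonoid.length x = i then A x else 0)
          * ∑' y : FreeMonoid W, (if FreeMonoid.length y = n - i then B y else 0))
        = ∑' y : FreeMonoid W, (if FreeMonoid.length x = i then A x else 0)
            * (if FreeMonoid.length y = n - i then B y else 0) :=
      fun x => (ENNReal.tsum_mul_left).symm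
    calc (∑' x : FreeMonoid W, if FreeMonoid.length x = i then A x else 0)
        * (∑' x : FreeMonoid W, if FreeMonoid.length x = n - i then B x else 0)
        = ∑' x : FreeMonoid W, ((if FreeMonoid.length x = i then A x else 0)
            * ∑' y : FreeMonoid W, (if FreeMonoid.length y = n - i then B y else 0)) :=
          (ENNReal.tsum_mul_right).symm
      _ = ∑' (x : FreeMonoid W) (y : FreeMonoid W),
            (if FreeMonoid.length x = i then A x else 0)
              * (if FreeMonoid.length y = n - i then B y else 0) := tsum_congr step
      _ = _ := (ENNReal.tsum_prod' (f := fun p : FreeMonoid W × FreeMonoid W =>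
            (if FreeMonoid.length p.1 = i then A p.1 else 0)
              * (if FreeMonoid.length p.2 = n - i then B p.2 else 0))).symm
  rw [Finset.sum_congr rfl fun i _ => h3 i,
    ← Summable.tsum_finsetSum (fun i _ => ENNReal.summable)]
  refine tsum_congr fun p => ?_
  by_cases hc : FreeMonoid.length p.1 + FreeMonoid.length p.2 = n
  · rw [if_pos hc]
    rw [Finset.sum_eq_single (FreeMonoid.length p.1)
      (fun i _ hi => by rw [if_neg fun h => hi h.symm, zero_mul])
      (fun habs => absurd (Finset.mem_range.2 (by omega)) habs)]
    rw [if_pos rfl, if_pos (by omega)]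
  · rw [if_neg hc]
    refine (Finset.sum_eq_zero fun i hi => ?_).symm
    rw [Finset.mem_range] at hi
    by_cases h1' : FreeMonoid.length p.1 = i
    · by_cases h2' : FreeMonoid.length p.2 = n - i
      · exact absurd (by omega) hc
      · rw [if_neg h2', mul_zero]
    · rw [if_neg h1', zero_mul]

/-- pushforward of a convolution is the convolution of pushforwards -/
lemma pushLen_mconv {a b : FreeMonoid W → ℝ} (ha0 : ∀ x, 0 ≤ a x) (hb0 : ∀ x, 0 ≤ b x)
    (hsa : Summable a) (hsb : Summable b) (n : ℕ) :
    pushLen (mconv a b) n = conv (pushLen a) (pushLen b) n := by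
  classical
  obtain ⟨hsum, _⟩ := mconv_facts ha0 hb0 hsa hsb
  have hL : ENNReal.ofReal (pushLen (mconv a b) n)
      = ∑' x : FreeMonoid W, if FreeMonoid.length x = n then
          (∑' p : FreeMonoid W × FreeMonoid W,
            if p.1 * p.2 = x then ENNReal.ofReal (a p.1) * ENNReal.ofReal (b p.2) else 0)
        else 0 := by
    rw [ofReal_pushLen (mconv_nonneg ha0 hb0) hsum n]
    refine tsum_congr fun x => ?_
    by_cases h : FreeMonoid.length x = n
    · rw [if_pos h, if_pos h, ofReal_mconv ha0 hb0 hsa hsb]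
    · rw [if_neg h, if_neg h]
  have hR : ENNReal.ofReal (conv (pushLen a) (pushLen b) n)
      = ∑ i ∈ Finset.range (n + 1),
          (∑' x : FreeMonoid W, if FreeMonoid.length x = i then ENNReal.ofReal (a x) else 0)
            * ∑' x : FreeMonoid W,
                if FreeMonoid.length x = n - i then ENNReal.ofReal (b x) else 0 := by
    rw [conv, ENNReal.ofReal_sum_of_nonneg (fun i _ =>
      mul_nonneg (pushLen_nonneg ha0 i) (pushLen_nonneg hb0 _))]
    refine Finset.sum_congr rfl fun i _ => ?_
    rw [ENNReal.ofReal_mul (pushLen_nonneg ha0 i), ofReal_pushLen ha0 hsa,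
      ofReal_pushLen hb0 hsb]
  have := (hL.trans (ekey (fun x => ENNReal.ofReal (a x)) (fun x => ENNReal.ofReal (b x)) n)).trans
    hR.symm
  rw [ENNReal.ofReal_eq_ofReal_iff (pushLen_nonneg (mconv_nonneg ha0 hb0) n)
    (conv_nonneg' (pushLen_nonneg ha0) (pushLen_nonneg hb0) n)] at this
  exact this

end Monoid

section Final
variable {W : Type*}

open scoped Classical

lemma iterM_facts {μ : FreeMonoid W → ℝ} (hμ0 : ∀ x, 0 ≤ μ x) (hμ1 : HasSum μ 1) :
    ∀ k, (∀ x, 0 ≤ iterConvM μ k x) ∧ HasSum (iterConvM μ k) 1 := by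
  intro k
  induction k with
  | zero =>
      constructor
      · intro x
        show (0:ℝ) ≤ if x = 1 then 1 else 0
        split <;> norm_num
      · show HasSum (fun x : FreeMonoid W => if x = 1 then (1:ℝ) else 0) 1
        exact hasSum_ite_eq (1 : FreeMonoid W) (1 : ℝ)
  | succ k ih =>
      exact ⟨mconv_nonneg ih.1 hμ0, mconv_hasSum_one ih.1 hμ0 ih.2 hμ1⟩

lemma push_iter {μ : FreeMonoid W → ℝ} (hμ0 : ∀ x, 0 ≤ μ x) (hμ1 : HasSum μ 1) :
    ∀ k n, pushLen (iterConvM μ k) n = iterConv (pushLen μ) k n := by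
  intro k
  induction k with
  | zero =>
      intro n
      show (∑' x : {x : FreeMonoid W // FreeMonoid.length x = n},
          (if x.1 = 1 then (1:ℝ) else 0)) = if n = 0 then 1 else 0
      by_cases hn : n = 0
      · subst hn
        rw [if_pos rfl]
        rw [tsum_eq_single (⟨1, FreeMonoid.length_one⟩ :
            {x : FreeMonoid W // FreeMonoid.length x = 0})]
        · rw [if_pos rfl]
        · intro b hb
          rw [if_neg]
          intro hb1
          exact hb (Subtype.ext hb1)
      · rw [if_neg hn]
        have : ∀ x : {x : FreeMonoid W // FreeMonoid.length x = n},
            (if x.1 = 1 then (1:ℝ) else 0) = 0 := by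
          intro x
          rw [if_neg]
          intro h1
          apply hn
          rw [← x.2, h1, FreeMonoid.length_one]
        rw [tsum_congr this, tsum_zero]
  | succ k ih =>
      intro n
      have h1 : pushLen (iterConvM μ (k+1)) n
          = conv (pushLen (iterConvM μ k)) (pushLen μ) n := by
        show pushLen (mconv (iterConvM μ k) μ) n = _
        exact pushLen_mconv (iterM_facts hμ0 hμ1 k).1 hμ0 (iterM_facts hμ0 hμ1 k).2.summable
          hμ1.summable n
      rw [h1]
      show conv (pushLen (iterConvM μ k)) (pushLen μ) n = conv (iterConv (pushLen μ) k)
        (pushLen μ) n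
      rw [funext ih]

end Final

/-- Let `μ` be a probability measure on the free monoid on a nonempty countable alphabet `W`.
If the pushforward `μ_φ` of `μ` under the length homomorphism has finite entropy, then
`φ_*(μ^{⋆k}) = (μ_φ)^{⋆k}` (the `k`-fold additive convolution on `ℕ`), each of these measures
has finite entropy, and `(1/k)·H(φ_*(μ^{⋆k})) → 0` as `k → ∞`. -/
theorem entropy_pushLen_iterConv_div_tendsto_zero
    {W : Type*} [Countable W] [Nonempty W]
    (μ : FreeMonoid W → ℝ) (hμ0 : ∀ x, 0 ≤ μ x) (hμ1 : HasSum μ 1)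
    (hH : Summable (fun n => pushLen μ n * Real.log (pushLen μ n))) :
    (∀ k n, pushLen (iterConvM μ k) n = iterConv (pushLen μ) k n) ∧
    (∀ k, Summable (fun n =>
      pushLen (iterConvM μ k) n * Real.log (pushLen (iterConvM μ k) n))) ∧
      Tendsto (fun k : ℕ => entropy (pushLen (iterConvM μ k)) / k) atTop (nhds 0) := by

  have hθ0 : ∀ n, 0 ≤ pushLen μ n := pushLen_nonneg hμ0
  have hθ1 : HasSum (pushLen μ) 1 := pushLen_hasSum_one hμ0 hμ1
  have hθe : Summable fun n => Real.negMulLog (pushLen μ n) := by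
    have heq : (fun n => Real.negMulLog (pushLen μ n))
        = fun n => -(pushLen μ n * Real.log (pushLen μ n)) := by
      funext n; rw [Real.negMulLog]; ring
    rw [heq]; exact hH.neg
  have part1 := push_iter hμ0 hμ1
  refine ⟨part1, fun k => ?_, ?_⟩
  · have heq : (fun n => pushLen (iterConvM μ k) n * Real.log (pushLen (iterConvM μ k) n))
        = fun n => -(Real.negMulLog (iterConv (pushLen μ) k n)) := by
      funext n; rw [part1 k n, Real.negMulLog]; ring
    rw [heq]
    exact ((iter_entropy hθ0 hθ1 hθe k).1).neg
  · have heq : (fun k : ℕ => entropy (pushLen (iterConvM μ k)) / k)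
        = fun k : ℕ => (∑' n, Real.negMulLog (iterConv (pushLen μ) k n)) / k := by
      funext k
      congr 1
      rw [entropy]
      have h1 : ∀ n, pushLen (iterConvM μ k) n * Real.log (pushLen (iterConvM μ k) n)
          = -Real.negMulLog (iterConv (pushLen μ) k n) := by
        intro n; rw [part1 k n, Real.negMulLog]; ring
      rw [tsum_congr h1, tsum_neg, neg_neg]
    rw [heq]
    exact nat_main hθ0 hθ1 hθe

end Stmt4
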